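/- Define g_a(b) := b² ∫_ℝ (1/(exp(2a·y)+1))² φ(y−b) dy for a, b ∈ ℝ. Then for every c with 0 < c < τ*, one has g_c(c) < g_{τ*}(c). -/
import Mathlib


open Real MeasureTheory

/-- The standard normal density. -/
noncomputable def gaussPdf (x : ℝ) : ℝ :=
  (Real.sqrt (2 * Real.pi))⁻¹ * Real.exp (-(x ^ 2) / 2)

/-- ρ(a) = ∫ (1/(exp(2ay)+1))² φ(y−a) dy. -/
noncomputable def ρ (a : ℝ) : ℝ :=
  ∫ y : ℝ, (1 / (Real.exp (2 * a * y) + 1)) ^ 2 * gaussPdf (y - a)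

/-- g_a(b) = b² ∫ (1/(exp(2ay)+1))² φ(y−b) dy. -/
noncomputable def g (a b : ℝ) : ℝ :=
  b ^ 2 * ∫ y : ℝ, (1 / (Real.exp (2 * a * y) + 1)) ^ 2 * gaussPdf (y - b)

lemma gaussPdf_pos (x : ℝ) : 0 < gaussPdf x := by
  unfold gaussPdf; positivity

lemma gaussPdf_neg (x : ℝ) : gaussPdf (-x) = gaussPdf x := by
  unfold gaussPdf; ring_nf

lemma gaussPdf_cont : Continuous gaussPdf := by
  unfold gaussPdf; continuity

lemma gaussPdf_integrable : Integrable gaussPdf := by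
  have h : Integrable (fun x : ℝ => Real.exp (-(1/2 : ℝ) * x ^ 2)) :=
    integrable_exp_neg_mul_sq (by norm_num)
  have h2 := h.const_mul (Real.sqrt (2 * Real.pi))⁻¹
  have : (fun x : ℝ => (Real.sqrt (2 * Real.pi))⁻¹ * Real.exp (-(1/2 : ℝ) * x ^ 2)) = gaussPdf := by
    funext x; unfold gaussPdf; congr 1; ring_nf
  rwa [this] at h2

lemma gauss_shift (c y : ℝ) : gaussPdf (y - c) = Real.exp (2 * c * y) * gaussPdf (y + c) := by
  unfold gaussPdf
  rw [mul_left_comm, ← Real.exp_add]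
  congr 2
  ring

lemma inv_form {e : ℝ} (he : 0 < e) : 1 / (e⁻¹ + 1) = 1 - 1 / (e + 1) := by
  have h1 : e + 1 ≠ 0 := by positivity
  have h2 : e ≠ 0 := ne_of_gt he
  rw [eq_sub_iff_add_eq, div_add_div _ _ (by positivity) h1, div_eq_one_iff_eq (by positivity)]
  field_simp
  ring

lemma expneg (t y : ℝ) : Real.exp (2 * t * (-y)) = (Real.exp (2 * t * y))⁻¹ := by
  rw [← Real.exp_neg]; ring_nf

lemma integrable_term (a b : ℝ) :
    Integrable (fun y : ℝ => (1 / (Real.exp (2 * a * y) + 1)) ^ 2 * gaussPdf (y - b)) := by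
  apply (gaussPdf_integrable.comp_sub_right b).mono'
  · apply Continuous.aestronglyMeasurable
    apply Continuous.mul
    · apply Continuous.pow
      apply Continuous.div continuous_const
      · continuity
      · intro y; positivity
    · exact gaussPdf_cont.comp (by continuity)
  · filter_upwards with y
    have hE : 0 < Real.exp (2 * a * y) := Real.exp_pos _
    have hg := gaussPdf_pos (y - b)
    have h1 : (1 / (Real.exp (2 * a * y) + 1)) ^ 2 ≤ 1 := by
      rw [one_div]
      apply pow_le_one₀ (by positivity)
      rw [inv_le_one_iff₀]
      right; linarith
    rw [Real.norm_eq_abs, abs_of_nonneg (by positivity)]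
    nlinarith

lemma key_pos {c t y : ℝ} (hy : 0 < y) (hc : 0 < c) (hct : c < t) :
    0 < ((1 / (Real.exp (2 * t * y) + 1)) ^ 2 - (1 / (Real.exp (2 * c * y) + 1)) ^ 2)
          * gaussPdf (y - c)
      + ((1 / (Real.exp (2 * t * (-y)) + 1)) ^ 2 - (1 / (Real.exp (2 * c * (-y)) + 1)) ^ 2)
          * gaussPdf (-y - c) := by
  have het : 0 < Real.exp (2 * t * y) := Real.exp_pos _
  have hec : 0 < Real.exp (2 * c * y) := Real.exp_pos _
  have hlt : Real.exp (2 * c * y) < Real.exp (2 * t * y) := by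
    apply Real.exp_lt_exp.2; nlinarith
  have hg : gaussPdf (-y - c) = gaussPdf (y + c) := by
    rw [show -y - c = -(y + c) by ring, gaussPdf_neg]
  rw [gauss_shift c y, hg, expneg t y, expneg c y, inv_form het, inv_form hec]
  set et := Real.exp (2 * t * y) with hetdef
  set ec := Real.exp (2 * c * y) with hecdef
  have hQ := gaussPdf_pos (y + c)
  set Q := gaussPdf (y + c)
  have hkey : ((1 / (et + 1)) ^ 2 - (1 / (ec + 1)) ^ 2) * (ec * Q)
      + ((1 - 1 / (et + 1)) ^ 2 - (1 - 1 / (ec + 1)) ^ 2) * Q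
      = (et - ec) ^ 2 / ((et + 1) ^ 2 * (ec + 1)) * Q := by
    have h1 : et + 1 ≠ 0 := by positivity
    have h2 : ec + 1 ≠ 0 := by positivity
    field_simp
    ring
  rw [hkey]
  have h3 : 0 < (et - ec) ^ 2 := pow_pos (sub_pos.2 hlt) 2
  exact mul_pos (div_pos h3 (by positivity)) hQ

/-- For every 0 < c < τ*, g_c(c) < g_{τ*}(c). -/
theorem stmt_18 (τstar : ℝ) (hτ0 : 0 ≤ τstar)
    (hτmax : ∀ τ : ℝ, 0 ≤ τ → τ ^ 2 * ρ τ ≤ τstar ^ 2 * ρ τstar) :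
    ∀ c : ℝ, 0 < c → c < τstar → g c c < g τstar c := by
  intro c hc hct
  set t := τstar with ht
  set F : ℝ → ℝ := fun y =>
    ((1 / (Real.exp (2 * t * y) + 1)) ^ 2 - (1 / (Real.exp (2 * c * y) + 1)) ^ 2)
      * gaussPdf (y - c) with hF
  have hFeq : F = fun y => (1 / (Real.exp (2 * t * y) + 1)) ^ 2 * gaussPdf (y - c)
      - (1 / (Real.exp (2 * c * y) + 1)) ^ 2 * gaussPdf (y - c) := by
    funext y; simp only [hF]; ring
  have hFint : Integrable F := by
    rw [hFeq]; exact (integrable_term t c).sub (integrable_term c c)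
  have hFnegint : Integrable (fun y => F (-y)) := hFint.comp_neg
  set H : ℝ → ℝ := fun y => F y + F (-y) with hH
  have hHint : Integrable H := hFint.add hFnegint
  have hHpos : ∀ y : ℝ, y ≠ 0 → 0 < H y := by
    intro y hy
    rcases lt_or_gt_of_ne hy with h | h
    · have hpos := key_pos (c := c) (t := t) (neg_pos.2 h) hc hct
      simp only [neg_neg] at hpos
      simp only [hH, hF]
      linarith [hpos]
    · have hpos := key_pos (c := c) (t := t) h hc hct
      simp only [hH, hF]
      linarith [hpos]
  have hHnonneg : ∀ y, 0 ≤ H y := by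
    intro y
    rcases eq_or_ne y 0 with h | h
    · subst h
      simp only [hH, hF]
      norm_num
    · exact le_of_lt (hHpos y h)
  have hintpos : 0 < ∫ y, H y := by
    rw [integral_pos_iff_support_of_nonneg hHnonneg hHint]
    apply lt_of_lt_of_le _ (measure_mono (show Set.Ioi (0:ℝ) ⊆ Function.support H from
      fun y hy => ne_of_gt (hHpos y (ne_of_gt hy))))
    rw [Real.volume_Ioi]
    exact ENNReal.zero_lt_top
  have h2F : ∫ y, H y = (∫ y, F y) + ∫ y, F y := by
    rw [hH, integral_add hFint hFnegint, integral_neg_eq_self]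
  have hFpos : 0 < ∫ y, F y := by linarith
  have hsub : ∫ y, F y = (∫ y : ℝ, (1 / (Real.exp (2 * t * y) + 1)) ^ 2 * gaussPdf (y - c))
      - ∫ y : ℝ, (1 / (Real.exp (2 * c * y) + 1)) ^ 2 * gaussPdf (y - c) := by
    rw [hFeq, integral_sub (integrable_term t c) (integrable_term c c)]
  rw [hsub] at hFpos
  unfold g
  have hc2 : (0:ℝ) < c ^ 2 := by positivity
  nlinarith [hFpos, hc2]
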